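/- arXiv:2406.10820 — 4 statements merged into one kernel-verified Lean document; each statement's English description precedes it below -/
import Mathlib

section
/- Let x ∈ ℚ ∩ [0,1). For every n ≥ 0 the determinant of the 2×2 matrix with rows (Q_n(z), P_n(z)) and (Q_{n+1}(z), P_{n+1}(z)) is a nonzero polynomial in z. -/
open Polynomial Filter

noncomputable section

/-- Pochhammer symbol `(a)_m = a(a+1)⋯(a+m−1)`. -/
def poch (a : ℚ) (m : ℕ) : ℚ := (ascPochhammer ℚ m).eval a

/-- The Padé denominator `Q_n` as a polynomial in `ℚ[z]`. -/
def Qpoly (x : ℚ) (n : ℕ) : Polynomial ℚ :=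
  ∑ l ∈ Finset.range (n + 1),
    Polynomial.C ((-1 : ℚ) ^ l * poch ((n : ℚ) + 1 + x) (n - l) / (Nat.factorial (n - l)) *
        poch (((n - l : ℕ) : ℚ) + 1 + x) l / (Nat.factorial l)) * Polynomial.X ^ (n - l)

/-- The Padé numerator `P_n` as a polynomial in `ℚ[z]`. -/
def Ppoly (x : ℚ) (n : ℕ) : Polynomial ℚ :=
  ∑ l ∈ Finset.range n,
    Polynomial.C (∑ k ∈ Finset.Ico l n,
        (-1 : ℚ) ^ (n - k - 1) * poch ((n : ℚ) + 1 + x) (k + 1) / (Nat.factorial (k + 1)) *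
          poch ((k : ℚ) + 2 + x) (n - k - 1) / (Nat.factorial (n - k - 1)) *
          (1 + x) / ((k : ℚ) - (l : ℚ) + 1 + x)) * Polynomial.X ^ l

/-!
The determinant is evaluated at `z = 0`. There `Q_n(0) = (-1)ⁿ (x+1)ₙ / n!`, while `P_n(0)` is
`(1+x)/n!` times the `n`-th forward difference at `x` of `t ↦ (t+1)ₙ / t`, minus its `k = 0` term.
Since `(t+1)ₙ / t` is `n!/t` plus a polynomial of degree `< n`, that forward difference is
`(-1)ⁿ n!² / (x (x+1)ₙ)`, and for `x > 0` the determinant at `0` comes out as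
`(1+x)(x+2n+2) / ((n+1)(x+n+1)) > 0`. Both sides are continuous in `x` at `0`, which settles
`x = 0`.
-/

open Finset Nat
open scoped fwdDiff

theorem fwdDiff_iter_congr_apply {M G : Type*} [AddCommMonoid M] [AddCommGroup G] (h : M)
    {f g : M → G} {n : ℕ} {y : M} (hfg : ∀ k ≤ n, f (y + k • h) = g (y + k • h)) :
    Δ_[h] ^[n] f y = Δ_[h] ^[n] g y := by
  simp only [fwdDiff_iter_eq_sum_shift]
  exact sum_congr rfl fun k hk => by rw [hfg k (Nat.lt_succ_iff.mp (mem_range.mp hk))]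

theorem eq_of_continuousAt_of_forall_gt {α β : Type*} [TopologicalSpace α] [LinearOrder α]
    [OrderTopology α] [DenselyOrdered α] [NoMaxOrder α] [TopologicalSpace β] [T2Space β]
    {f g : α → β} {a : α} (hf : ContinuousAt f a) (hg : ContinuousAt g a)
    (hfg : ∀ x > a, f x = g x) : f a = g a :=
  tendsto_nhds_unique_of_eventuallyEq (hf.tendsto.mono_left nhdsWithin_le_nhds)
    (hg.tendsto.mono_left nhdsWithin_le_nhds) (eventually_nhdsWithin_of_forall (s := Set.Ioi a) hfg)

section Field

variable {K : Type*} [Field K]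

theorem ascPochhammer_eval_ne_zero_of_succ {n : ℕ} {y : K}
    (hy : (ascPochhammer K (n + 1)).eval y ≠ 0) : (ascPochhammer K n).eval y ≠ 0 := by
  rw [ascPochhammer_succ_eval] at hy
  exact left_ne_zero_of_mul hy

theorem ascPochhammer_eval_add_one_ne_zero_of_succ {n : ℕ} {y : K}
    (hy : (ascPochhammer K (n + 1)).eval y ≠ 0) : (ascPochhammer K n).eval (y + 1) ≠ 0 := by
  rw [ascPochhammer_succ_left, eval_mul, eval_comp] at hy
  simpa using right_ne_zero_of_mul hy

theorem fwdDiff_iter_inv_apply (n : ℕ) {y : K} (hy : (ascPochhammer K (n + 1)).eval y ≠ 0) :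
    Δ_[1] ^[n] (fun t : K => t⁻¹) y = (-1) ^ n * n ! / (ascPochhammer K (n + 1)).eval y := by
  induction n generalizing y with
  | zero => simp
  | succ n ih =>
    have hA := ascPochhammer_eval_ne_zero_of_succ hy
    have hB := ascPochhammer_eval_add_one_ne_zero_of_succ hy
    have key : (ascPochhammer K (n + 2)).eval y = y * (ascPochhammer K (n + 1)).eval (y + 1) := by
      rw [ascPochhammer_succ_left, eval_mul, eval_comp]; simp
    rw [key] at hy
    rw [ascPochhammer_succ_eval] at key
    rw [Function.iterate_succ_apply', fwdDiff, ih hA, ih hB, ascPochhammer_succ_eval (n + 1) y]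
    have hyn : y + ((n + 1 : ℕ) : K) ≠ 0 := by
      rintro h; rw [h, mul_zero] at key; exact hy key.symm
    generalize (ascPochhammer K (n + 1)).eval y = A at *
    generalize (ascPochhammer K (n + 1)).eval (y + 1) = B at *
    field_simp
    push_cast [Nat.factorial_succ] at key ⊢
    linear_combination (-1) ^ n * (n ! : K) * key

theorem fwdDiff_iter_eval_divX {p : K[X]} {n : ℕ} (hp : p.natDegree ≤ n) :
    Δ_[1] ^[n] p.divX.eval = 0 := by
  rcases n with _ | n
  · rw [eq_C_of_natDegree_le_zero hp, divX_C]
    ext; simp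
  · exact fwdDiff_iter_eq_zero_of_degree_lt (by rw [natDegree_divX_eq_natDegree_tsub_one]; omega)

theorem fwdDiff_iter_eval_div_self_apply {p : K[X]} {n : ℕ} (hp : p.natDegree ≤ n) {y : K}
    (hy : (ascPochhammer K (n + 1)).eval y ≠ 0) :
    Δ_[1] ^[n] (fun t => p.eval t / t) y
      = p.eval 0 * ((-1) ^ n * n ! / (ascPochhammer K (n + 1)).eval y) := by
  have hsplit : ∀ k ≤ n, p.eval (y + k • 1) / (y + k • 1)
      = (p.divX.eval + p.eval 0 • fun t : K => t⁻¹) (y + k • 1) := by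
    intro k hk
    have hyk : y + k • (1 : K) ≠ 0 := fun h => hy <| (ascPochhammer_eval_eq_zero_iff _ _).mpr
      ⟨k, by omega, by simpa [eq_neg_iff_add_eq_zero, add_comm] using h⟩
    conv_lhs => rw [← X_mul_divX_add p]
    simp only [eval_add, eval_mul, eval_X, eval_C, coeff_zero_eq_eval_zero, Pi.add_apply,
      Pi.smul_apply, smul_eq_mul]
    field_simp
  rw [fwdDiff_iter_congr_apply 1 hsplit, fwdDiff_iter_add, fwdDiff_iter_const_smul,
    fwdDiff_iter_eval_divX hp, Pi.add_apply, Pi.smul_apply, fwdDiff_iter_inv_apply n hy]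
  simp

end Field

theorem poch_mul_poch (a : ℚ) (m j : ℕ) : poch a m * poch (a + m) j = poch a (m + j) := by
  simpa [poch, eval_comp] using congrArg (eval a) (ascPochhammer_mul ℚ m j)

theorem fwdDiff_iter_poch_succ_div {x : ℚ} (hx : 0 < x) (n : ℕ) :
    Δ_[1] ^[n] (fun t => poch (t + 1) n / t) x = (-1) ^ n * n ! ^ 2 / (x * poch (x + 1) n) := by
  have hp : ((ascPochhammer ℚ n).comp (X + 1)).natDegree ≤ n := by
    rw [natDegree_comp, ascPochhammer_natDegree, ← C_1, natDegree_X_add_C, mul_one]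
  have hg : (fun t => poch (t + 1) n / t)
      = fun t => ((ascPochhammer ℚ n).comp (X + 1)).eval t / t := by
    simp [poch, eval_comp]
  rw [hg, fwdDiff_iter_eval_div_self_apply hp (ascPochhammer_pos _ _ hx).ne']
  simp [ascPochhammer_succ_left, poch, eval_comp, ascPochhammer_eval_one]
  ring

theorem Qpoly_eval_zero (x : ℚ) (n : ℕ) : (Qpoly x n).eval 0 = (-1) ^ n * poch (x + 1) n / n ! := by
  rw [Qpoly, eval_finsetSum, sum_eq_single_of_mem n (self_mem_range_succ n)]
  · simp [poch, add_comm x]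
  · intro l hl hln
    simp [Nat.sub_ne_zero_of_lt (lt_of_le_of_ne (mem_range_succ_iff.mp hl) hln)]

theorem Ppoly_eval_zero (x : ℚ) (n : ℕ) :
    (Ppoly x n).eval 0 = (1 + x) / n ! * ∑ k ∈ range n, (-1) ^ (n - (k + 1)) * n.choose (k + 1) *
      (poch (x + (k + 1 : ℕ) + 1) n / (x + (k + 1 : ℕ))) := by
  rcases n.eq_zero_or_pos with rfl | hn
  · simp [Ppoly]
  rw [Ppoly, eval_finsetSum, sum_eq_single_of_mem 0 (mem_range.mpr hn)]
  · rw [eval_mul, eval_C, eval_pow, eval_X, pow_zero, mul_one, ← range_eq_Ico, mul_sum]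
    refine sum_congr rfl fun k hk => ?_
    have hkn : k + 1 ≤ n := mem_range.mp hk
    have hpoch := poch_mul_poch ((k : ℚ) + 2 + x) (n - (k + 1)) (k + 1)
    have hshift : (k : ℚ) + 2 + x + (n - (k + 1) : ℕ) = n + 1 + x := by push_cast [hkn]; ring
    rw [Nat.sub_add_cancel hkn, hshift] at hpoch
    have hbase : x + (k + 1 : ℕ) + 1 = (k : ℚ) + 2 + x := by push_cast; ring
    have hchoose : (n.choose (k + 1) : ℚ) ≠ 0 := by exact_mod_cast (Nat.choose_pos hkn).ne'
    rw [Nat.sub_sub, hbase, ← hpoch, ← Nat.choose_mul_factorial_mul_factorial hkn]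
    push_cast
    field_simp
    ring_nf
  · intro l _ hl
    simp [hl]

theorem Ppoly_eval_zero_eq_fwdDiff (x : ℚ) (n : ℕ) :
    (Ppoly x n).eval 0 = (1 + x) / n ! *
      (Δ_[1] ^[n] (fun t => poch (t + 1) n / t) x - (-1) ^ n * (poch (x + 1) n / x)) := by
  rw [Ppoly_eval_zero, fwdDiff_iter_eq_sum_shift, sum_range_succ']
  simp [zsmul_eq_mul]

theorem continuousAt_Ppoly_eval_zero (n : ℕ) : ContinuousAt (fun x => (Ppoly x n).eval 0) 0 := by
  simp only [Ppoly_eval_zero, poch]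
  fun_prop (disch := positivity)

def padeDet (x : ℚ) (n : ℕ) : ℚ[X] := Qpoly x n * Ppoly x (n + 1) - Ppoly x n * Qpoly x (n + 1)

theorem padeDet_eval_zero_of_pos {x : ℚ} (hx : 0 < x) (n : ℕ) :
    (padeDet x n).eval 0 = (1 + x) * (x + 2 * n + 2) / ((n + 1) * (x + n + 1)) := by
  have hsucc : poch (x + 1) (n + 1) = poch (x + 1) n * (x + 1 + n) := ascPochhammer_succ_eval _ _
  rw [padeDet, eval_sub, eval_mul, eval_mul, Qpoly_eval_zero, Qpoly_eval_zero,
    Ppoly_eval_zero_eq_fwdDiff, Ppoly_eval_zero_eq_fwdDiff, fwdDiff_iter_poch_succ_div hx,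
    fwdDiff_iter_poch_succ_div hx, hsucc, Nat.factorial_succ, pow_succ]
  have hP : 0 < poch (x + 1) n := ascPochhammer_pos _ _ (by linarith)
  generalize poch (x + 1) n = P at *
  have hxn : x + 1 + n ≠ 0 := by positivity
  rcases neg_one_pow_eq_or ℚ n with h | h <;> rw [h] <;> push_cast <;> field_simp <;> ring

theorem padeDet_eval_zero {x : ℚ} (hx : 0 ≤ x) (n : ℕ) :
    (padeDet x n).eval 0 = (1 + x) * (x + 2 * n + 2) / ((n + 1) * (x + n + 1)) := by
  rcases hx.lt_or_eq with hx | rfl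
  · exact padeDet_eval_zero_of_pos hx n
  refine eq_of_continuousAt_of_forall_gt (f := fun x => (padeDet x n).eval 0) ?_ ?_
    fun y hy => padeDet_eval_zero_of_pos hy n
  · have := continuousAt_Ppoly_eval_zero n
    have := continuousAt_Ppoly_eval_zero (n + 1)
    simp only [padeDet, eval_sub, eval_mul, Qpoly_eval_zero, poch]
    fun_prop
  · fun_prop (disch := positivity)

theorem pade_determinant_ne_zero_general (x : ℚ) (hx0 : 0 ≤ x) (n : ℕ) :
    (Matrix.of ![![Qpoly x n, Ppoly x n], ![Qpoly x (n + 1), Ppoly x (n + 1)]]).det ≠ 0 := by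
  rw [Matrix.det_fin_two_of, ← padeDet]
  refine ne_of_apply_ne (eval 0) ?_
  rw [padeDet_eval_zero hx0, eval_zero]
  positivity

/-- For every `n ≥ 0` the determinant of the matrix with rows `(Q_n, P_n)` and
`(Q_{n+1}, P_{n+1})` is a nonzero polynomial in `z`. -/
theorem pade_determinant_ne_zero (x : ℚ) (hx0 : 0 ≤ x) (hx1 : x < 1) (n : ℕ) :
    (Matrix.of ![![Qpoly x n, Ppoly x n], ![Qpoly x (n + 1), Ppoly x (n + 1)]]).det ≠ 0 :=
  pade_determinant_ne_zero_general x hx0 n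

end
end

section
/- Let x ∈ ℚ ∩ [0,1) and z ∈ ℂ with |z| > 1. The sequences (P_n(z))_{n≥0}, (Q_n(z))_{n≥0} and (R_n(z))_{n≥0} each satisfy the linear recurrence A_n X_{n+1} − (z − B_n) X_n + C_n X_{n−1} = 0 for all n ≥ 1, where A_n = (n+x+1)(n+1)/((2n+x+1)(2n+x+2)), B_n = (2n² + (1+x)(2n+x))/((2n+x)(2n+x+2)) and C_n = n(n+x)/((2n+x)(2n+x+1)); moreover A_n → 1/4, B_n → 1/2 and C_n → 1/4 as n → ∞, so the characteristic equation of the recurrence is X² − 2(2z−1)X + 1 = 0. -/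
open Polynomial Filter

noncomputable section

/-- The Padé denominator polynomial `Q_n` evaluated at `z`. -/
def Qval (x : ℚ) (n : ℕ) (z : ℂ) : ℂ :=
  ∑ l ∈ Finset.range (n + 1),
    (((-1 : ℚ) ^ l * poch ((n : ℚ) + 1 + x) (n - l) / (Nat.factorial (n - l)) *
        poch (((n - l : ℕ) : ℚ) + 1 + x) l / (Nat.factorial l) : ℚ) : ℂ) * z ^ (n - l)

/-- The Padé numerator polynomial `P_n` evaluated at `z`. -/
def Pval (x : ℚ) (n : ℕ) (z : ℂ) : ℂ :=
  ∑ l ∈ Finset.range n,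
    ((∑ k ∈ Finset.Ico l n,
        (-1 : ℚ) ^ (n - k - 1) * poch ((n : ℚ) + 1 + x) (k + 1) / (Nat.factorial (k + 1)) *
          poch ((k : ℚ) + 2 + x) (n - k - 1) / (Nat.factorial (n - k - 1)) *
          (1 + x) / ((k : ℚ) - (l : ℚ) + 1 + x) : ℚ) : ℂ) * z ^ l

/-- The shifted logarithm `f(z) = (1+x)·Σ_{k≥0} 1/((k+x+1) z^{k+1})`. -/
def fval (x : ℚ) (z : ℂ) : ℂ :=
  (1 + (x : ℂ)) * ∑' k : ℕ, 1 / (((k : ℂ) + (x : ℂ) + 1) * z ^ (k + 1))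

/-- The Padé remainder `R_n(z) = Q_n(z) f(z) − P_n(z)`. -/
def Rval (x : ℚ) (n : ℕ) (z : ℂ) : ℂ := Qval x n z * fval x z - Pval x n z

/-- Recurrence coefficient `A_n`. -/
def Acoef (x : ℚ) (n : ℕ) : ℚ :=
  (((n : ℚ) + x + 1) * ((n : ℚ) + 1)) / ((2 * n + x + 1) * (2 * n + x + 2))

/-- Recurrence coefficient `B_n`. -/
def Bcoef (x : ℚ) (n : ℕ) : ℚ :=
  (2 * (n : ℚ) ^ 2 + (1 + x) * (2 * n + x)) / ((2 * n + x) * (2 * n + x + 2))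

/-- Recurrence coefficient `C_n`. -/
def Ccoef (x : ℚ) (n : ℕ) : ℚ :=
  ((n : ℚ) * ((n : ℚ) + x)) / ((2 * n + x) * (2 * n + x + 1))

/-!
The coefficient of `z ^ j` in `Q_n` is `(-1)^(n+j) (n choose j) (j+1+x)_n / n!`, and the three-term
relation already holds coefficientwise: after Pascal-type relations between the binomials, it is
a rational identity in `n`, `j`, `x`. Since `P_n` is the polynomial part of `Q_n f`, it is
`∑ⱼ q_{n,j} T_j` with `T_j` the polynomial part of `z^j f`, and `z T_j = T_{j+1} - c_j`. Hence
`P_n` satisfies the same relation up to `∑ⱼ q_{n,j} c_j`, which vanishes for `n ≥ 1` as the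
`n`-th finite difference of a polynomial of degree `n - 1` in `j`. The relation for `R_n` follows by
linearity, and each coefficient is a ratio of quadratics in `n`.
-/

open Finset

lemma poch_succ (a : ℚ) (m : ℕ) : poch a (m + 1) = poch a m * (a + m) := by
  simp [poch, ascPochhammer_succ_right]

lemma poch_succ_left (a : ℚ) (m : ℕ) : poch a (m + 1) = a * poch (a + 1) m := by
  simp [poch, ascPochhammer_succ_left]

lemma poch_add (a : ℚ) (m k : ℕ) : poch a (m + k) = poch a m * poch (a + m) k := by
  simp [poch, ← ascPochhammer_mul, eval_comp]

/-- The coefficient of `z ^ j` in `Q_n(z)`. The sign `(-1) ^ (n + j)` agrees with `(-1) ^ (n - j)`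
for `j ≤ n` and avoids truncated subtraction; for `j > n` the binomial vanishes. -/
def qcoeff (x : ℚ) (n j : ℕ) : ℚ :=
  (-1) ^ (n + j) * n.choose j * poch ((j : ℚ) + 1 + x) n / n.factorial

lemma qcoeff_of_lt {x : ℚ} {n j : ℕ} (h : n < j) : qcoeff x n j = 0 := by
  simp [qcoeff, Nat.choose_eq_zero_of_lt h]

lemma qcoeff_of_add_eq (x : ℚ) {n j d : ℕ} (h : j + d = n) :
    qcoeff x n j = (-1) ^ d * poch ((n : ℚ) + 1 + x) j / j.factorial *
      poch ((j : ℚ) + 1 + x) d / d.factorial := by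
  subst h
  have hpoch : poch ((j : ℚ) + 1 + x) (j + d) =
      poch ((j : ℚ) + 1 + x) d * poch (((j + d : ℕ) : ℚ) + 1 + x) j := by
    rw [add_comm j d, poch_add]; push_cast; ring_nf
  rw [qcoeff, hpoch, Nat.cast_add_choose, show j + d + j = d + 2 * j by ring, pow_add, pow_mul]
  field_simp
  ring

lemma Qval_eq_sum (x : ℚ) {n N : ℕ} (z : ℂ) (h : n < N) :
    Qval x n z = ∑ j ∈ range N, (qcoeff x n j : ℂ) * z ^ j := by
  rw [← sum_subset (range_subset_range.mpr h) fun j _ hj => by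
      rw [qcoeff_of_lt (by simpa using hj), Rat.cast_zero, zero_mul],
    Qval, ← sum_range_reflect]
  refine sum_congr rfl fun j hj => ?_
  have hj : j ≤ n := Nat.lt_succ_iff.mp (mem_range.mp hj)
  rw [qcoeff_of_add_eq x (Nat.add_sub_of_le hj), Nat.add_sub_cancel, Nat.sub_sub_self hj]

lemma cast_choose_mul_cast_sub {R : Type*} [Ring R] (n k : ℕ) :
    (n.choose k : R) * ((n - k : ℕ) : R) = n.choose k * ((n : R) - k) := by
  rcases le_or_gt k n with h | h
  · rw [Nat.cast_sub h]
  · simp [Nat.choose_eq_zero_of_lt h]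

lemma qcoeff_recurrence_zero (x : ℚ) (hx : 0 ≤ x) (m : ℕ) :
    Acoef x (m + 1) * qcoeff x (m + 2) 0 + Bcoef x (m + 1) * qcoeff x (m + 1) 0 +
      Ccoef x (m + 1) * qcoeff x m 0 = 0 := by
  have hp1 := poch_succ (1 + x) m
  have hp2 := poch_succ (1 + x) (m + 1)
  simp only [qcoeff, Acoef, Bcoef, Ccoef, Nat.choose_zero_right, Nat.cast_zero, zero_add,
    add_zero, Nat.factorial_succ]
  rw [hp2, hp1]
  push_cast
  field_simp
  ring

lemma qcoeff_recurrence_succ (x : ℚ) (hx : 0 ≤ x) (m k : ℕ) :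
    Acoef x (m + 1) * qcoeff x (m + 2) (k + 1) + Bcoef x (m + 1) * qcoeff x (m + 1) (k + 1) +
      Ccoef x (m + 1) * qcoeff x m (k + 1) = qcoeff x (m + 1) k := by
  have h2 : ((m + 2).choose (k + 1) : ℚ) * (k + 1) = (m + 2) * (m + 1).choose k := by
    exact_mod_cast (Nat.add_one_mul_choose_eq (m + 1) k).symm
  have h1 : ((m + 1).choose (k + 1) : ℚ) * (k + 1) = (m + 1).choose k * ((m : ℚ) + 1 - k) := by
    have e := congrArg (Nat.cast : ℕ → ℚ) (Nat.choose_succ_right_eq (m + 1) k)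
    push_cast at e
    rw [e, cast_choose_mul_cast_sub]; push_cast; ring
  have h0 : (m.choose (k + 1) : ℚ) * (m + 1) = (m + 1).choose (k + 1) * ((m : ℚ) - k) := by
    have e := congrArg (Nat.cast : ℕ → ℚ) (Nat.choose_mul_succ_eq m (k + 1))
    push_cast at e
    rw [e, ← Nat.add_sub_add_right m 1 k, cast_choose_mul_cast_sub]; push_cast; ring
  set p := poch ((k : ℚ) + 2 + x) m
  have hp1 : poch ((k : ℚ) + 2 + x) (m + 1) = p * ((k : ℚ) + 2 + x + m) := poch_succ _ _
  have hp2 : poch ((k : ℚ) + 2 + x) (m + 2) =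
      p * ((k : ℚ) + 2 + x + m) * ((k : ℚ) + 2 + x + (m + 1)) := by
    rw [poch_succ, hp1]; push_cast; ring
  have hp0 : poch ((k : ℚ) + 1 + x) (m + 1) = ((k : ℚ) + 1 + x) * p := by
    rw [poch_succ_left, show (k : ℚ) + 1 + x + 1 = (k : ℚ) + 2 + x by ring]
  simp only [qcoeff, Acoef, Bcoef, Ccoef, Nat.factorial_succ]
  rw [eq_div_of_mul_eq (by positivity) h0, eq_div_of_mul_eq (by positivity) h1,
    eq_div_of_mul_eq (by positivity) h2,
    show ((k + 1 : ℕ) : ℚ) + 1 + x = (k : ℚ) + 2 + x by push_cast; ring, hp1, hp2, hp0]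
  push_cast
  field_simp
  ring

lemma recurrence_sum_qcoeff_mul (x : ℚ) (hx : 0 ≤ x) (m : ℕ) (w : ℕ → ℂ) :
    (Acoef x (m + 1) : ℂ) * ∑ j ∈ range (m + 3), (qcoeff x (m + 2) j : ℂ) * w j +
        (Bcoef x (m + 1) : ℂ) * ∑ j ∈ range (m + 3), (qcoeff x (m + 1) j : ℂ) * w j +
        (Ccoef x (m + 1) : ℂ) * ∑ j ∈ range (m + 3), (qcoeff x m j : ℂ) * w j =
      ∑ k ∈ range (m + 2), (qcoeff x (m + 1) k : ℂ) * w (k + 1) := by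
  simp only [mul_sum, ← sum_add_distrib]
  rw [sum_range_succ']
  have h0 := congrArg (Rat.cast : ℚ → ℂ) (qcoeff_recurrence_zero x hx m)
  push_cast at h0
  rw [← mul_assoc, ← mul_assoc, ← mul_assoc, ← add_mul, ← add_mul, h0, zero_mul, add_zero]
  refine sum_congr rfl fun k _ => ?_
  have hk := congrArg (Rat.cast : ℚ → ℂ) (qcoeff_recurrence_succ x hx m k)
  push_cast at hk
  rw [← hk]
  ring

lemma Qval_recurrence (x : ℚ) (hx : 0 ≤ x) (z : ℂ) (m : ℕ) :
    (Acoef x (m + 1) : ℂ) * Qval x (m + 2) z - (z - (Bcoef x (m + 1) : ℂ)) * Qval x (m + 1) z +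
      (Ccoef x (m + 1) : ℂ) * Qval x m z = 0 := by
  have hz : z * Qval x (m + 1) z =
      ∑ k ∈ range (m + 2), (qcoeff x (m + 1) k : ℂ) * z ^ (k + 1) := by
    rw [Qval_eq_sum x z (Nat.lt_succ_self _), mul_sum]
    exact sum_congr rfl fun k _ => by ring
  have key := recurrence_sum_qcoeff_mul x hx m (z ^ ·)
  rw [← hz, ← Qval_eq_sum x z (by omega), ← Qval_eq_sum x z (by omega),
    ← Qval_eq_sum x z (by omega)] at key
  linear_combination key

lemma sum_qcoeff_div_eq_zero (x : ℚ) (hx : 0 ≤ x) (m : ℕ) :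
    ∑ j ∈ range (m + 2), qcoeff x (m + 1) j / ((j : ℚ) + 1 + x) = 0 := by
  set g : ℚ[X] := (ascPochhammer ℚ m).comp (X + C (2 + x))
  have hg : g.natDegree < m + 1 := by
    rw [natDegree_comp, ascPochhammer_natDegree, natDegree_X_add_C]; omega
  have hdiff := congrFun (Polynomial.fwdDiff_iter_eq_zero_of_degree_lt hg) 0
  rw [fwdDiff_iter_eq_sum_shift] at hdiff
  rw [← mul_eq_zero_of_right ((m + 1).factorial : ℚ)⁻¹ hdiff, mul_sum]
  refine sum_congr rfl fun j hj => ?_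
  have hj : j ≤ m + 1 := Nat.lt_succ_iff.mp (mem_range.mp hj)
  have hsign : (-1 : ℚ) ^ (m + 1 + j) = (-1) ^ (m + 1 - j) := by
    rw [show m + 1 + j = (m + 1 - j) + 2 * j by omega, pow_add, pow_mul]; norm_num
  have hpoch : poch ((j : ℚ) + 1 + x) (m + 1) = ((j : ℚ) + 1 + x) * g.eval (j : ℚ) := by
    rw [poch_succ_left, poch, eval_comp, eval_add, eval_X, eval_C]
    congr 2; ring
  rw [qcoeff, hsign, hpoch, zsmul_eq_mul, zero_add, nsmul_one]
  push_cast
  field_simp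

/-- The coefficients of `f(z) = ∑ₘ fcoeff x m / z ^ (m + 1)`. -/
def fcoeff (x : ℚ) (m : ℕ) : ℚ := (1 + x) / ((m : ℚ) + 1 + x)

/-- The polynomial part of `z ^ j * f(z)`. -/
def fPolyPart (x : ℚ) (z : ℂ) (j : ℕ) : ℂ :=
  ∑ l ∈ range j, (fcoeff x (j - 1 - l) : ℂ) * z ^ l

lemma mul_fPolyPart (x : ℚ) (z : ℂ) (j : ℕ) :
    z * fPolyPart x z j = fPolyPart x z (j + 1) - fcoeff x j := by
  rw [fPolyPart, fPolyPart, sum_range_succ', mul_sum]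
  simp only [Nat.add_sub_cancel, Nat.sub_zero, pow_zero, mul_one, add_sub_cancel_right]
  exact sum_congr rfl fun l _ => by rw [show j - (l + 1) = j - 1 - l by omega]; ring

lemma Pval_summand_eq (x : ℚ) {n k l : ℕ} (hlk : l ≤ k) (hkn : k < n) :
    (-1 : ℚ) ^ (n - k - 1) * poch ((n : ℚ) + 1 + x) (k + 1) / (Nat.factorial (k + 1)) *
        poch ((k : ℚ) + 2 + x) (n - k - 1) / (Nat.factorial (n - k - 1)) *
        (1 + x) / ((k : ℚ) - (l : ℚ) + 1 + x) =
      qcoeff x n (k + 1) * fcoeff x (k - l) := by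
  rw [qcoeff_of_add_eq x (show k + 1 + (n - k - 1) = n by omega), fcoeff, Nat.cast_sub hlk]
  push_cast
  ring_nf

lemma Pval_eq_sum (x : ℚ) {n N : ℕ} (z : ℂ) (h : n < N) :
    Pval x n z = ∑ j ∈ range N, (qcoeff x n j : ℂ) * fPolyPart x z j := by
  rw [← sum_subset (range_subset_range.mpr h) fun j _ hj => by
      rw [qcoeff_of_lt (by simpa using hj), Rat.cast_zero, zero_mul],
    sum_range_succ', fPolyPart, sum_range_zero, mul_zero, add_zero, Pval]
  calc _ = ∑ l ∈ Ico 0 n, ∑ k ∈ Ico l n,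
        (qcoeff x n (k + 1) : ℂ) * (fcoeff x (k - l) : ℂ) * z ^ l := by
        rw [range_eq_Ico]
        refine sum_congr rfl fun l _ => ?_
        rw [Rat.cast_sum, sum_mul]
        refine sum_congr rfl fun k hk => ?_
        rw [Pval_summand_eq x (mem_Ico.mp hk).1 (mem_Ico.mp hk).2]
        push_cast; ring
    _ = ∑ k ∈ Ico 0 n, ∑ l ∈ Ico 0 (k + 1),
        (qcoeff x n (k + 1) : ℂ) * (fcoeff x (k - l) : ℂ) * z ^ l := sum_Ico_Ico_comm _ _ _
    _ = _ := by
        rw [range_eq_Ico]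
        refine sum_congr rfl fun k _ => ?_
        rw [fPolyPart, ← range_eq_Ico, mul_sum]
        simp only [Nat.add_sub_cancel, mul_assoc]

lemma Pval_recurrence (x : ℚ) (hx : 0 ≤ x) (z : ℂ) (m : ℕ) :
    (Acoef x (m + 1) : ℂ) * Pval x (m + 2) z - (z - (Bcoef x (m + 1) : ℂ)) * Pval x (m + 1) z +
      (Ccoef x (m + 1) : ℂ) * Pval x m z = 0 := by
  have hshift : ∀ k, (qcoeff x (m + 1) k : ℂ) * fPolyPart x z (k + 1) =
      z * ((qcoeff x (m + 1) k : ℂ) * fPolyPart x z k) +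
        (1 + x : ℂ) * ((qcoeff x (m + 1) k / ((k : ℚ) + 1 + x) : ℚ) : ℂ) := fun k => by
    have h := mul_fPolyPart x z k
    rw [fcoeff] at h
    push_cast at h ⊢
    linear_combination -(qcoeff x (m + 1) k : ℂ) * h
  have hz : ∑ k ∈ range (m + 2), (qcoeff x (m + 1) k : ℂ) * fPolyPart x z (k + 1) =
      z * Pval x (m + 1) z := by
    rw [sum_congr rfl fun k _ => hshift k, sum_add_distrib, ← mul_sum, ← mul_sum, ← Rat.cast_sum,
      sum_qcoeff_div_eq_zero x hx m, Rat.cast_zero, mul_zero, add_zero,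
      Pval_eq_sum x z (Nat.lt_succ_self _)]
  have key := recurrence_sum_qcoeff_mul x hx m (fPolyPart x z)
  rw [hz, ← Pval_eq_sum x z (by omega), ← Pval_eq_sum x z (by omega),
    ← Pval_eq_sum x z (by omega)] at key
  linear_combination key

lemma tendsto_quadratic_div_quadratic (a b c d e f : ℝ) (hd : d ≠ 0) :
    Tendsto (fun n : ℕ => (a * n ^ 2 + b * n + c) / (d * n ^ 2 + e * n + f)) atTop
      (nhds (a / d)) := by
  have h : Tendsto (fun n : ℕ => (n : ℝ)⁻¹) atTop (nhds 0) := tendsto_inv_atTop_nhds_zero_nat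
  have hlim := (((tendsto_const_nhds (x := a)).add (h.const_mul b)).add ((h.pow 2).const_mul c)).div
    ((tendsto_const_nhds.add (h.const_mul e)).add ((h.pow 2).const_mul f)) (by simpa using hd)
  rw [show (a + b * 0 + c * 0 ^ 2) / (d + e * 0 + f * 0 ^ 2) = a / d by simp] at hlim
  refine hlim.congr' ?_
  filter_upwards [eventually_ne_atTop 0] with n hn
  simp only [Pi.div_apply]
  field_simp

lemma tendsto_Acoef (x : ℚ) : Tendsto (fun n : ℕ => (Acoef x n : ℝ)) atTop (nhds (1 / 4)) := by
  convert tendsto_quadratic_div_quadratic 1 (x + 2) (x + 1) 4 (4 * x + 6) ((x + 1) * (x + 2))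
    four_ne_zero using 2 with n
  simp only [Acoef]
  push_cast
  ring

lemma tendsto_Bcoef (x : ℚ) : Tendsto (fun n : ℕ => (Bcoef x n : ℝ)) atTop (nhds (1 / 2)) := by
  convert tendsto_quadratic_div_quadratic 2 (2 * (1 + x)) ((1 + x) * x) 4 (4 * x + 4)
    (x * (x + 2)) four_ne_zero using 2 with n
  · simp only [Bcoef]
    push_cast
    ring
  · norm_num

lemma tendsto_Ccoef (x : ℚ) : Tendsto (fun n : ℕ => (Ccoef x n : ℝ)) atTop (nhds (1 / 4)) := by
  convert tendsto_quadratic_div_quadratic 1 x 0 4 (4 * x + 2) (x * (x + 1))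
    four_ne_zero using 2 with n
  simp only [Ccoef]
  push_cast
  ring

theorem pade_recurrence_general (x : ℚ) (hx0 : 0 ≤ x)
    (z : ℂ) :
    (∀ n : ℕ, 1 ≤ n →
        (Acoef x n : ℂ) * Pval x (n + 1) z - (z - (Bcoef x n : ℂ)) * Pval x n z +
          (Ccoef x n : ℂ) * Pval x (n - 1) z = 0) ∧
      (∀ n : ℕ, 1 ≤ n →
        (Acoef x n : ℂ) * Qval x (n + 1) z - (z - (Bcoef x n : ℂ)) * Qval x n z +
          (Ccoef x n : ℂ) * Qval x (n - 1) z = 0) ∧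
      (∀ n : ℕ, 1 ≤ n →
        (Acoef x n : ℂ) * Rval x (n + 1) z - (z - (Bcoef x n : ℂ)) * Rval x n z +
          (Ccoef x n : ℂ) * Rval x (n - 1) z = 0) ∧
      Tendsto (fun n : ℕ => (Acoef x n : ℝ)) atTop (nhds (1 / 4)) ∧
      Tendsto (fun n : ℕ => (Bcoef x n : ℝ)) atTop (nhds (1 / 2)) ∧
      Tendsto (fun n : ℕ => (Ccoef x n : ℝ)) atTop (nhds (1 / 4)) := by
  have reindex : ∀ F : ℕ → ℂ, (∀ m : ℕ, (Acoef x (m + 1) : ℂ) * F (m + 2) -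
        (z - (Bcoef x (m + 1) : ℂ)) * F (m + 1) + (Ccoef x (m + 1) : ℂ) * F m = 0) →
      ∀ n : ℕ, 1 ≤ n → (Acoef x n : ℂ) * F (n + 1) - (z - (Bcoef x n : ℂ)) * F n +
        (Ccoef x n : ℂ) * F (n - 1) = 0 := by
    intro F hF n hn
    obtain ⟨m, rfl⟩ := Nat.exists_eq_add_of_le' hn
    exact hF m
  refine ⟨reindex (Pval x · z) (Pval_recurrence x hx0 z),
    reindex (Qval x · z) (Qval_recurrence x hx0 z), reindex (Rval x · z) fun m => ?_,
    tendsto_Acoef x, tendsto_Bcoef x, tendsto_Ccoef x⟩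
  simp only [Rval]
  linear_combination fval x z * Qval_recurrence x hx0 z m - Pval_recurrence x hx0 z m

/-- `(P_n(z))`, `(Q_n(z))` and `(R_n(z))` each satisfy the recurrence
`A_n X_{n+1} − (z − B_n) X_n + C_n X_{n−1} = 0` for `n ≥ 1`; moreover
`A_n → 1/4`, `B_n → 1/2`, `C_n → 1/4`, so the characteristic equation of the recurrence
is `X² − 2(2z−1)X + 1 = 0`. -/
theorem pade_recurrence (x : ℚ) (hx0 : 0 ≤ x) (hx1 : x < 1)
    (z : ℂ) (hz : 1 < ‖z‖) :
    (∀ n : ℕ, 1 ≤ n →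
        (Acoef x n : ℂ) * Pval x (n + 1) z - (z - (Bcoef x n : ℂ)) * Pval x n z +
          (Ccoef x n : ℂ) * Pval x (n - 1) z = 0) ∧
      (∀ n : ℕ, 1 ≤ n →
        (Acoef x n : ℂ) * Qval x (n + 1) z - (z - (Bcoef x n : ℂ)) * Qval x n z +
          (Ccoef x n : ℂ) * Qval x (n - 1) z = 0) ∧
      (∀ n : ℕ, 1 ≤ n →
        (Acoef x n : ℂ) * Rval x (n + 1) z - (z - (Bcoef x n : ℂ)) * Rval x n z +
          (Ccoef x n : ℂ) * Rval x (n - 1) z = 0) ∧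
      Tendsto (fun n : ℕ => (Acoef x n : ℝ)) atTop (nhds (1 / 4)) ∧
      Tendsto (fun n : ℕ => (Bcoef x n : ℝ)) atTop (nhds (1 / 2)) ∧
      Tendsto (fun n : ℕ => (Ccoef x n : ℝ)) atTop (nhds (1 / 4)) :=
  pade_recurrence_general x hx0 z

end
end

section
/- If z ∈ ℂ satisfies |z| > 1, then the polynomial P(X) = X² − 2(2z−1)X + 1 has two distinct simple roots, and their moduli ρ_1(z) ≤ ρ_2(z) satisfy ρ_1(z)·ρ_2(z) = 1 and the strict inequalities ρ_1(z) < 1 < ρ_2(z). -/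
open Polynomial

/-!
Write `P = (X - r₁)(X - r₂)` with `r₁ r₂ = 1` and `r₁ + r₂ = 2(2z - 1)`. If `|r₁| = 1`, then
`r₂ = r₁⁻¹ = conj r₁`, so `2z - 1 = Re r₁ ∈ [-1, 1]` and `z ∈ [0, 1]`, contradicting `|z| > 1`.
Hence `|r₁| ≠ 1`, and as `|r₁| |r₂| = 1` one modulus lies below `1` and the other above it.
The roots are distinct because a double root would satisfy `r₁² = 1`.
-/

theorem Polynomial.X_sq_sub_C_mul_X_add_C_eq_mul {R : Type*} [CommRing R] {s p r₁ r₂ : R}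
    (hsum : r₁ + r₂ = s) (hprod : r₁ * r₂ = p) :
    X ^ 2 - C s * X + C p = (X - C r₁) * (X - C r₂) := by
  subst hsum hprod
  simp only [map_add, map_mul]
  ring

theorem IsAlgClosed.exists_add_eq_mul_eq {K : Type*} [Field K] [IsAlgClosed K] (s p : K) :
    ∃ r₁ r₂ : K, r₁ + r₂ = s ∧ r₁ * r₂ = p := by
  have hdeg : (X ^ 2 - C s * X + C p : K[X]).degree = 2 := by compute_degree!
  obtain ⟨r, hr⟩ := IsAlgClosed.exists_root _ (hdeg ▸ two_ne_zero)
  refine ⟨r, s - r, by ring, ?_⟩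
  simp only [IsRoot, eval_add, eval_sub, eval_mul, eval_pow, eval_C, eval_X] at hr
  linear_combination -hr

theorem Complex.add_eq_two_mul_re_of_mul_eq_one {a b : ℂ} (hab : a * b = 1) (ha : ‖a‖ = 1) :
    a + b = 2 * a.re := by
  rw [eq_inv_of_mul_eq_one_right hab, Complex.inv_eq_conj ha, Complex.add_conj]
  push_cast
  ring

theorem norm_le_one_of_norm_root_eq_one {z r₁ r₂ : ℂ} (hsum : r₁ + r₂ = 2 * (2 * z - 1))
    (hprod : r₁ * r₂ = 1) (hr₁ : ‖r₁‖ = 1) : ‖z‖ ≤ 1 := by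
  have hz : z = ((r₁.re + 1) / 2 : ℝ) := by
    push_cast
    linear_combination (Complex.add_eq_two_mul_re_of_mul_eq_one hprod hr₁ - hsum) / 4
  obtain ⟨hlow, hup⟩ := abs_le.mp ((Complex.abs_re_le_norm r₁).trans_eq hr₁)
  rw [hz, Complex.norm_real, Real.norm_eq_abs, abs_of_nonneg (by linarith)]
  linarith

theorem min_lt_one_and_one_lt_max_of_mul_eq_one {α : Type*} [CommRing α] [LinearOrder α]
    [IsStrictOrderedRing α] {a b : α} (ha : 0 ≤ a) (hab : a * b = 1)
    (ha₁ : a ≠ 1) : min a b < 1 ∧ 1 < max a b := by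
  rcases ha₁.lt_or_gt with h | h
  · exact ⟨min_lt_of_left_lt h, lt_max_of_lt_right (by nlinarith)⟩
  · exact ⟨min_lt_of_right_lt (by nlinarith), lt_max_of_lt_left h⟩

/-- For `|z| > 1` the polynomial `P(X) = X² − 2(2z−1)X + 1` has two distinct simple roots,
whose moduli `ρ₁(z) ≤ ρ₂(z)` satisfy `ρ₁(z)·ρ₂(z) = 1` and `ρ₁(z) < 1 < ρ₂(z)`. -/
theorem quadratic_roots_moduli (z : ℂ) (hz : 1 < ‖z‖) :
    ∃ r₁ r₂ : ℂ, r₁ ≠ r₂ ∧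
      (Polynomial.X ^ 2 - Polynomial.C (2 * (2 * z - 1)) * Polynomial.X + 1 =
        (Polynomial.X - Polynomial.C r₁) * (Polynomial.X - Polynomial.C r₂)) ∧
      ‖r₁‖ * ‖r₂‖ = 1 ∧
      min (‖r₁‖) (‖r₂‖) < 1 ∧
      1 < max (‖r₁‖) (‖r₂‖) := by
  obtain ⟨r₁, r₂, hsum, hprod⟩ := IsAlgClosed.exists_add_eq_mul_eq (2 * (2 * z - 1)) (1 : ℂ)
  have hr₁ : ‖r₁‖ ≠ 1 := fun h => hz.not_ge (norm_le_one_of_norm_root_eq_one hsum hprod h)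
  have hnorm : ‖r₁‖ * ‖r₂‖ = 1 := by rw [← norm_mul, hprod, norm_one]
  refine ⟨r₁, r₂, ?_, ?_, hnorm,
    min_lt_one_and_one_lt_max_of_mul_eq_one (norm_nonneg _) hnorm hr₁⟩
  · rintro rfl
    exact hr₁ (by nlinarith [norm_nonneg r₁])
  · rw [← C_1]
    exact X_sq_sub_C_mul_X_add_C_eq_mul hsum hprod
end

section
/- Let β be an algebraic number and x ∈ ℚ ∩ [0,1). With κ_n = den(x)·ν_n(x)·d_n(x)·den(β)ⁿ, the numbers κ_n·Q_n(β) and κ_n·P_n(β) are algebraic integers for every n ≥ 0. -/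
open Polynomial Filter

noncomputable section

/-- `den(β)`: the least positive integer `m` such that `mβ` is an algebraic integer. -/
def denC (β : ℂ) : ℕ := sInf {m : ℕ | 0 < m ∧ IsIntegral ℤ ((m : ℂ) * β)}

/-- `d_n(x)`: the common denominator of `1/(1+x), …, 1/(n+x)`. -/
def dnval (x : ℚ) (n : ℕ) : ℕ := (Finset.Icc 1 n).lcm fun j => (1 / ((j : ℚ) + x)).den

/-- `ν_n(x) = den(x)ⁿ·∏_{q prime, q ∣ den(x)} q^{⌊n/(q−1)⌋}`. -/
def nunval (x : ℚ) (n : ℕ) : ℕ :=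
  x.den ^ n * ∏ q ∈ x.den.primeFactors, q ^ (n / (q - 1))

/-- `κ_n = den(x)·ν_n(x)·d_n(x)·den(β)ⁿ`. -/
def kappan (β : ℂ) (x : ℚ) (n : ℕ) : ℕ := x.den * nunval x n * dnval x n * denC β ^ n

/-!
Write `x = a/b` in lowest terms. Then `bᵐ·(t + x)_m = ∏_{j<m} (a + tb + jb)` is a product of `m`
consecutive terms of an arithmetic progression with difference `b`. For a prime `p ∤ b` the
progression is, modulo any power of `p`, `b` times a run of `m` consecutive integers, so the
`p`-part of `m!` divides it; for `p ∣ b` Legendre's bound `v_p(m!) ≤ m/(p-1)` is absorbed by the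
factor `p^⌊m/(p-1)⌋` of `ν_m(x)`. Hence `ν_m(x)·(t + x)_m/m!` is an integer. The coefficients of
`Q_n` and `P_n` are products of two such quotients with `m₁ + m₂ = n`, and `ν_{m₁}ν_{m₂} ∣ ν_n`;
the remaining factor `(1 + x)/(j + x)` of `P_n` is cleared by `den(x)·d_n(x)`, and `den(β)ⁿ`
clears the powers of `β`.
-/

open Finset Nat

lemma poch_eq_prod_range (a : ℚ) (m : ℕ) : poch a m = ∏ j ∈ range m, (a + j) := by
  induction m with
  | zero => simp [poch]
  | succ k ih => rw [poch, ascPochhammer_succ_eval, ← poch, ih, prod_range_succ]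

lemma dvd_prod_range_add_mul_of_coprime {q b : ℕ} (a : ℤ) (m : ℕ) (hqb : q.Coprime b)
    (hq : q ∣ m !) : (q : ℤ) ∣ ∏ j ∈ range m, (a + j * b) := by
  have : NeZero q := ⟨fun h => factorial_ne_zero m (zero_dvd_iff.mp (h ▸ hq))⟩
  have hb : (b : ZMod q) * (b : ZMod q)⁻¹ = 1 :=
    ZMod.mul_inv_of_unit _ ((ZMod.isUnit_iff_coprime b q).mpr hqb.symm)
  set c := ((a : ZMod q) * (b : ZMod q)⁻¹).val
  -- modulo `q` the progression is `b` times the run of consecutive integers `c, …, c + m - 1`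
  have hterm : ∀ j : ℕ, ((a + j * b : ℤ) : ZMod q) = b * ((c + j : ℕ) : ZMod q) := by
    intro j
    push_cast
    rw [ZMod.natCast_zmod_val]
    linear_combination (-(a : ZMod q)) * hb
  rw [← ZMod.intCast_zmod_eq_zero_iff_dvd, Int.cast_prod, prod_congr rfl fun j _ => hterm j,
    prod_mul_distrib, ← Nat.cast_prod (f := fun j => c + j), ← ascFactorial_eq_prod_range,
    (ZMod.natCast_eq_zero_iff _ _).mpr (hq.trans (factorial_dvd_ascFactorial c m)), mul_zero]

lemma factorial_dvd_mul_prod_range_add_mul (a : ℤ) {b : ℕ} (hb : b ≠ 0) (m : ℕ) :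
    (m ! : ℤ) ∣ ((∏ p ∈ b.primeFactors, p ^ (m / (p - 1)) : ℕ) : ℤ) *
      ∏ j ∈ range m, (a + j * b) := by
  rw [Int.natCast_dvd, Int.natAbs_mul, Int.natAbs_natCast, dvd_iff_prime_pow_dvd_dvd]
  intro p k hp hpk
  by_cases hpb : p ∣ b
  · have hk : k ≤ m / (p - 1) :=
      ((hp.pow_dvd_iff_le_factorization (factorial_ne_zero m)).mp hpk).trans
        (factorization_factorial_le_div_pred hp m)
    exact dvd_mul_of_dvd_left ((pow_dvd_pow p hk).trans
      (dvd_prod_of_mem (fun p => p ^ (m / (p - 1))) (mem_primeFactors.mpr ⟨hp, hpb, hb⟩))) _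
  · exact dvd_mul_of_dvd_right (Int.natCast_dvd.mp (dvd_prod_range_add_mul_of_coprime a m
      (((hp.coprime_iff_not_dvd).mpr hpb).pow_left k) hpk)) _

lemma isIntegral_nunval_mul_poch_div_factorial (x : ℚ) (t : ℤ) (m : ℕ) :
    IsIntegral ℤ ((nunval x m : ℚ) * (poch (t + x) m / m !)) := by
  set a := x.num + t * x.den
  have hterm : ∀ j : ℕ, (x.den : ℚ) * (t + x + j) = ((a + j * x.den : ℤ) : ℚ) := by
    intro j
    push_cast [a]
    linear_combination Rat.den_mul_eq_num x
  have hprod :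
      (x.den : ℚ) ^ m * poch (t + x) m = ((∏ j ∈ range m, (a + j * x.den) : ℤ) : ℚ) := by
    rw [poch_eq_prod_range, Int.cast_prod, ← prod_congr rfl fun j _ => hterm j, prod_mul_distrib,
      prod_const, card_range]
  obtain ⟨c, hc⟩ := factorial_dvd_mul_prod_range_add_mul a x.den_nz m
  have hc' : ((∏ p ∈ x.den.primeFactors, p ^ (m / (p - 1)) : ℕ) : ℚ) *
      ((∏ j ∈ range m, (a + j * x.den) : ℤ) : ℚ) = (m ! : ℚ) * c := by
    exact_mod_cast congrArg (Int.cast : ℤ → ℚ) hc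
  rw [← hprod] at hc'
  have heq : (nunval x m : ℚ) * (poch (t + x) m / m !) = c := by
    rw [nunval, Nat.cast_mul, Nat.cast_pow]
    field_simp
    linear_combination hc'
  rw [heq]
  exact isIntegral_intCast c

lemma nunval_mul_nunval_dvd (x : ℚ) (m₁ m₂ : ℕ) :
    nunval x m₁ * nunval x m₂ ∣ nunval x (m₁ + m₂) := by
  have h : nunval x m₁ * nunval x m₂ =
      x.den ^ (m₁ + m₂) * ∏ p ∈ x.den.primeFactors, p ^ (m₁ / (p - 1) + m₂ / (p - 1)) := by
    simp only [nunval, pow_add, prod_mul_distrib]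
    ring
  rw [h, nunval]
  exact mul_dvd_mul_left _
    (prod_dvd_prod_of_dvd _ _ fun p _ => pow_dvd_pow p Nat.div_add_div_le_add_div)

lemma isIntegral_nunval_mul_poch_mul_poch (x : ℚ) (t₁ t₂ : ℤ) (m₁ m₂ : ℕ) :
    IsIntegral ℤ ((nunval x (m₁ + m₂) : ℚ) * (poch (t₁ + x) m₁ / m₁ !) *
      (poch (t₂ + x) m₂ / m₂ !)) := by
  obtain ⟨e, he⟩ := nunval_mul_nunval_dvd x m₁ m₂
  refine Eq.subst (motive := IsIntegral ℤ) ?_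
    (((isIntegral_natCast e).mul (isIntegral_nunval_mul_poch_div_factorial x t₁ m₁)).mul
      (isIntegral_nunval_mul_poch_div_factorial x t₂ m₂))
  rw [he]
  push_cast
  ring

lemma isIntegral_mul_of_den_dvd {r : ℚ} {M : ℕ} (h : r.den ∣ M) :
    IsIntegral ℤ ((M : ℚ) * r) := by
  obtain ⟨t, rfl⟩ := h
  rw [Nat.cast_mul, mul_comm (r.den : ℚ), mul_assoc, Rat.den_mul_eq_num]
  exact (isIntegral_natCast t).mul (isIntegral_intCast _)

lemma isIntegral_dnval_div (x : ℚ) {j n : ℕ} (hj : j ∈ Icc 1 n) :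
    IsIntegral ℤ ((dnval x n : ℚ) / (j + x)) := by
  rw [div_eq_mul_one_div]
  exact isIntegral_mul_of_den_dvd (dvd_lcm hj)

lemma isIntegral_nunval_mul_Qval_coeff (x : ℚ) {n l : ℕ} (hl : l ≤ n) :
    IsIntegral ℤ ((nunval x n : ℚ) * ((-1) ^ l * poch (n + 1 + x) (n - l) / (n - l)! *
      poch (((n - l : ℕ) : ℚ) + 1 + x) l / l !)) := by
  have h := isIntegral_nunval_mul_poch_mul_poch x (n + 1) ((n - l : ℕ) + 1) (n - l) l
  rw [Nat.sub_add_cancel hl] at h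
  refine Eq.subst (motive := IsIntegral ℤ) ?_ (((isIntegral_intCast (-1)).pow l).mul h)
  push_cast
  ring

lemma isIntegral_mul_Pval_coeff_summand (x : ℚ) {n k l : ℕ} (hlk : l ≤ k) (hkn : k < n) :
    IsIntegral ℤ (((x.den * nunval x n * dnval x n : ℕ) : ℚ) *
      ((-1) ^ (n - k - 1) * poch (n + 1 + x) (k + 1) / (k + 1)! *
        poch (k + 2 + x) (n - k - 1) / (n - k - 1)! * (1 + x) / (k - l + 1 + x))) := by
  have hpoch := isIntegral_nunval_mul_poch_mul_poch x (n + 1) (k + 2) (k + 1) (n - k - 1)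
  rw [show k + 1 + (n - k - 1) = n by omega] at hpoch
  have hden : IsIntegral ℤ ((x.den : ℚ) * (1 + x)) := by
    rw [mul_one_add, Rat.den_mul_eq_num]
    exact (isIntegral_natCast _).add (isIntegral_intCast _)
  have hdn := isIntegral_dnval_div x (j := k - l + 1) (n := n) (by simp only [mem_Icc]; omega)
  refine Eq.subst (motive := IsIntegral ℤ) ?_
    (((((isIntegral_intCast (-1)).pow (n - k - 1)).mul hpoch).mul hden).mul hdn)
  push_cast [Nat.cast_sub hlk]
  ring

lemma isIntegral_denC_mul (β : ℂ) : IsIntegral ℤ ((denC β : ℂ) * β) := by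
  by_cases h : {m : ℕ | 0 < m ∧ IsIntegral ℤ ((m : ℂ) * β)}.Nonempty
  · exact (Nat.sInf_mem h).2
  -- for transcendental `β` the set is empty and `denC β = sInf ∅ = 0`
  · rw [denC, Set.not_nonempty_iff_eq_empty.mp h, Nat.sInf_empty, Nat.cast_zero, zero_mul]
    exact isIntegral_zero

lemma isIntegral_mul_sum_mul_pow {s : Finset ℕ} {c : ℕ → ℚ} {e : ℕ → ℕ} {M D n : ℕ} {z : ℂ}
    (hc : ∀ l ∈ s, IsIntegral ℤ ((M : ℚ) * c l)) (he : ∀ l ∈ s, e l ≤ n)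
    (hz : IsIntegral ℤ ((D : ℂ) * z)) :
    IsIntegral ℤ (((M * D ^ n : ℕ) : ℂ) * ∑ l ∈ s, (c l : ℂ) * z ^ e l) := by
  rw [mul_sum]
  refine IsIntegral.sum _ fun l hl => ?_
  have hMc : IsIntegral ℤ (((M * c l : ℚ)) : ℂ) := (hc l hl).algebraMap
  have hD : D ^ n = D ^ (n - e l) * D ^ e l := by rw [← pow_add, Nat.sub_add_cancel (he l hl)]
  refine Eq.subst (motive := IsIntegral ℤ) ?_
    ((hMc.mul (isIntegral_natCast (D ^ (n - e l)))).mul (hz.pow (e l)))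
  rw [hD]
  push_cast
  ring

theorem denominators_clear_general (x : ℚ) (β : ℂ) (n : ℕ) :
    IsIntegral ℤ ((kappan β x n : ℂ) * Qval x n β) ∧
      IsIntegral ℤ ((kappan β x n : ℂ) * Pval x n β) := by
  refine ⟨isIntegral_mul_sum_mul_pow (fun l hl => ?_) (fun l _ => Nat.sub_le n l)
      (isIntegral_denC_mul β),
    isIntegral_mul_sum_mul_pow (fun l hl => ?_) (fun l hl => (mem_range.mp hl).le)
      (isIntegral_denC_mul β)⟩
  · refine Eq.subst (motive := IsIntegral ℤ) ?_ ((isIntegral_natCast (x.den * dnval x n)).mul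
      (isIntegral_nunval_mul_Qval_coeff x (Nat.lt_succ_iff.mp (mem_range.mp hl))))
    push_cast
    ring
  · rw [mul_sum]
    exact IsIntegral.sum _ fun k hk =>
      isIntegral_mul_Pval_coeff_summand x (mem_Ico.mp hk).1 (mem_Ico.mp hk).2

/-- With `κ_n = den(x)·ν_n(x)·d_n(x)·den(β)ⁿ`, the numbers `κ_n·Q_n(β)` and `κ_n·P_n(β)`
are algebraic integers for every `n ≥ 0`. -/
theorem denominators_clear (x : ℚ) (hx0 : 0 ≤ x) (hx1 : x < 1)
    (β : ℂ) (halg : IsAlgebraic ℚ β) (n : ℕ) :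
    IsIntegral ℤ ((kappan β x n : ℂ) * Qval x n β) ∧
      IsIntegral ℤ ((kappan β x n : ℂ) * Pval x n β) :=
  denominators_clear_general x β n

end
end
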